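/- arXiv:1909.13588 — 3 statements merged into one kernel-verified Lean document; each statement's English description precedes it below -/
import Mathlib

section
/- Let A be an associative ℂ-algebra, g : A → A an invertible linear map, and T : A → ℂ a g-twisted trace (T(ab) = T(b g(a))). If the bilinear form (a,b) ↦ T(ab) has zero kernel (i.e., T(ab) = 0 for all b implies a = 0), then g is an algebra automorphism: g(ab) = g(a)g(b) for all a, b. -/
theorem twisted_trace_mul_map_mul {A M : Type*} [Semigroup A] {g : A → A} {T : A → M}
    (hT : ∀ a b : A, T (a * b) = T (b * g a)) (a b c : A) :
    T (c * g (a * b)) = T (c * (g a * g b)) :=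
  calc T (c * g (a * b)) = T (a * (b * c)) := by rw [← hT, mul_assoc]
    _ = T (b * (c * g a)) := by rw [hT, mul_assoc]
    _ = T (c * (g a * g b)) := by rw [hT, mul_assoc]

theorem twisted_trace_map_mul_sub_mul_mul_eq_zero {A M : Type*} [NonUnitalRing A]
    [AddCommGroup M] {g : A → A} (hg : Function.Surjective g) {T : A →+ M}
    (hT : ∀ a b : A, T (a * b) = T (b * g a)) (a b e : A) :
    T ((g (a * b) - g a * g b) * e) = 0 := by
  obtain ⟨c, rfl⟩ := hg e
  rw [← hT, mul_sub, map_sub, twisted_trace_mul_map_mul hT, sub_self]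

/-- If `T` is a `g`-twisted trace on an associative `ℂ`-algebra `A`
(`T(ab) = T(b g(a))`, `g` an invertible linear map) and the bilinear form
`(a,b) ↦ T(ab)` has zero kernel, then `g` is an algebra automorphism:
`g(ab) = g(a) g(b)`. -/
theorem twisted_trace_nondeg_automorphism {A : Type*} [Ring A] [Algebra ℂ A]
    (g : A ≃ₗ[ℂ] A) (T : A →ₗ[ℂ] ℂ)
    (hT : ∀ a b : A, T (a * b) = T (b * g a))
    (hker : ∀ a : A, (∀ b : A, T (a * b) = 0) → a = 0) :
    ∀ a b : A, g (a * b) = g a * g b := fun a b =>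
  sub_eq_zero.mp <| hker _ <|
    twisted_trace_map_mul_sub_mul_mul_eq_zero (T := T.toAddMonoidHom) g.surjective hT a b
end

section
/- Let V be a finite-dimensional symplectic vector space, W(V) the Weyl algebra of V, and g ∈ Sp(V) a symplectic automorphism having 1 as an eigenvalue. Then every g-twisted trace on W(V) vanishes: if T : W(V) → ℂ is linear with T(ab) = T(b g(a)) for all a, b, then T = 0. -/
/-- The defining relation of the Weyl algebra of a symplectic vector space:
`v w − w v = ω(v,w)`. -/
inductive WeylRel {V : Type*} [AddCommGroup V] [Module ℂ V]
    (ω : V →ₗ[ℂ] V →ₗ[ℂ] ℂ) : TensorAlgebra ℂ V → TensorAlgebra ℂ V → Prop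
  | mk (v w : V) : WeylRel ω
      (TensorAlgebra.ι ℂ v * TensorAlgebra.ι ℂ w -
        TensorAlgebra.ι ℂ w * TensorAlgebra.ι ℂ v)
      (algebraMap ℂ (TensorAlgebra ℂ V) (ω v w))

/-- The Weyl algebra `W(V)` of a symplectic vector space `(V, ω)`. -/
abbrev WeylAlgebra {V : Type*} [AddCommGroup V] [Module ℂ V]
    (ω : V →ₗ[ℂ] V →ₗ[ℂ] ℂ) := RingQuot (WeylRel ω)

/-!
Since `g u = u`, the twisted trace condition gives `T (u b - b u) = T (b g(u)) - T (b u) = 0`,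
so `T` vanishes on the image of `ad u`. Choosing `w` with `ω(u, w) = 1` gives `ad u (w) = 1`,
and `ad u` is locally nilpotent on `W(V)` (it lowers degree, being a derivation that maps generators
to scalars). For a locally nilpotent derivation `D` with `D w = 1`, induction on the nilpotency
index of `a` shows that every `w ^ m * a` lies in the image of `D`, dividing by `m + 1` in
characteristic zero. Hence `ad u` is surjective and `T = 0`.
-/

section Ad

variable (R : Type*) {A : Type*} [CommRing R] [Ring A] [Algebra R A]

def ad (u : A) : Module.End R A := LinearMap.mulLeft R u - LinearMap.mulRight R u

variable {R}

theorem ad_apply (u a : A) : ad R u a = u * a - a * u := rfl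

theorem ad_mul (u a b : A) : ad R u (a * b) = ad R u a * b + a * ad R u b := by
  simp only [ad_apply, mul_sub, sub_mul, mul_assoc]
  abel

theorem ad_algebraMap (u : A) (r : R) : ad R u (algebraMap R A r) = 0 := by
  rw [ad_apply, Algebra.commutes, sub_self]

theorem ad_pow_mul_eq_zero {u : A} {m n : ℕ} {a b : A}
    (ha : (ad R u ^ m) a = 0) (hb : (ad R u ^ n) b = 0) :
    (ad R u ^ (m + n)) (a * b) = 0 := by
  induction m generalizing a n b with
  | zero => simp_all
  | succ m ihm =>
    induction n generalizing b with
    | zero => simp_all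
    | succ n ihn =>
      rw [pow_succ, Module.End.mul_apply] at ha hb
      rw [show m + 1 + (n + 1) = m + 1 + n + 1 by omega, pow_succ, Module.End.mul_apply,
        ad_mul, map_add, ihn hb, add_zero, show m + 1 + n = m + (n + 1) by omega,
        ihm ha (n := n + 1) (by rwa [pow_succ, Module.End.mul_apply])]

variable (R) in
def adNilpotentSubalgebra (u : A) : Subalgebra R A where
  carrier := {a | ∃ n, (ad R u ^ n) a = 0}
  mul_mem' := fun ⟨m, ha⟩ ⟨n, hb⟩ => ⟨m + n, ad_pow_mul_eq_zero ha hb⟩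
  add_mem' := fun ⟨m, ha⟩ ⟨n, hb⟩ => ⟨m + n, by
    rw [map_add, Module.End.pow_map_zero_of_le (m.le_add_right n) ha,
      Module.End.pow_map_zero_of_le (n.le_add_left m) hb, add_zero]⟩
  algebraMap_mem' r := ⟨1, by rw [pow_one, ad_algebraMap]⟩

theorem ad_pow_succ_of_ad_eq_one {u w : A} (hw : ad R u w = 1) (m : ℕ) :
    ad R u (w ^ (m + 1)) = ((m + 1 : ℕ) : R) • w ^ m := by
  induction m with
  | zero => simpa using hw
  | succ m ih =>
    rw [pow_succ, ad_mul, ih, hw, smul_mul_assoc, ← pow_succ, mul_one, Nat.cast_succ (m + 1),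
      add_smul, one_smul]

theorem pow_mul_mem_range_ad {K : Type*} [Field K] [CharZero K] [Algebra K A] {u w : A}
    (hw : ad K u w = 1) {n : ℕ} {a : A} (ha : (ad K u ^ n) a = 0) (m : ℕ) :
    w ^ m * a ∈ LinearMap.range (ad K u) := by
  induction n generalizing a m with
  | zero => simp_all
  | succ n ih =>
    rw [pow_succ, Module.End.mul_apply] at ha
    -- `ad u (w ^ (m + 1) * a) = (m + 1) • w ^ m * a + w ^ (m + 1) * ad u a`
    obtain ⟨b, hb⟩ := ih ha (m + 1)
    refine ⟨((m + 1 : ℕ) : K)⁻¹ • (w ^ (m + 1) * a - b), ?_⟩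
    rw [map_smul, map_sub, ad_mul, ad_pow_succ_of_ad_eq_one hw, hb, smul_mul_assoc,
      add_sub_cancel_right, inv_smul_smul₀ (Nat.cast_ne_zero.mpr m.succ_ne_zero)]

theorem ad_surjective {K : Type*} [Field K] [CharZero K] [Algebra K A] {u w : A}
    (hw : ad K u w = 1) (hu : adNilpotentSubalgebra K u = ⊤) : Function.Surjective (ad K u) := by
  intro a
  obtain ⟨n, ha⟩ : a ∈ adNilpotentSubalgebra K u := hu ▸ Algebra.mem_top
  simpa using pow_mul_mem_range_ad hw ha 0

theorem twisted_trace_ad_eq_zero {M : Type*} [AddCommGroup M] [Module R M] {G : A → A}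
    {T : A →ₗ[R] M} (hT : ∀ a b, T (a * b) = T (b * G a)) {u : A} (hu : G u = u) (b : A) :
    T (ad R u b) = 0 := by
  rw [ad_apply, map_sub, hT, hu, sub_self]

end Ad

namespace WeylAlgebra

variable {V : Type*} [AddCommGroup V] [Module ℂ V] (ω : V →ₗ[ℂ] V →ₗ[ℂ] ℂ)

def ι : V →ₗ[ℂ] WeylAlgebra ω :=
  (RingQuot.mkAlgHom ℂ (WeylRel ω)).toLinearMap ∘ₗ TensorAlgebra.ι ℂ

theorem ι_apply (v : V) : ι ω v = RingQuot.mkAlgHom ℂ (WeylRel ω) (TensorAlgebra.ι ℂ v) := rfl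

theorem ad_ι_ι (v w : V) : ad ℂ (ι ω v) (ι ω w) = algebraMap ℂ _ (ω v w) := by
  simpa [ad_apply, ι_apply] using RingQuot.mkAlgHom_rel ℂ (WeylRel.mk (ω := ω) v w)

theorem adNilpotentSubalgebra_ι (u : V) : adNilpotentSubalgebra ℂ (ι ω u) = ⊤ := by
  refine Algebra.eq_top_iff.mpr fun a => ?_
  obtain ⟨x, rfl⟩ := RingQuot.mkAlgHom_surjective ℂ (WeylRel ω) a
  suffices h : Algebra.adjoin ℂ (Set.range (TensorAlgebra.ι ℂ)) ≤
      (adNilpotentSubalgebra ℂ (ι ω u)).comap (RingQuot.mkAlgHom ℂ (WeylRel ω)) by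
    exact h (by rw [TensorAlgebra.adjoin_range_ι]; exact Algebra.mem_top)
  refine Algebra.adjoin_le ?_
  rintro _ ⟨v, rfl⟩
  refine ⟨2, ?_⟩
  change (ad ℂ (ι ω u) ^ 2) (ι ω v) = 0
  rw [pow_two, Module.End.mul_apply, ad_ι_ι, ad_algebraMap]

theorem ad_ι_surjective {u w : V} (h : ω u w ≠ 0) : Function.Surjective (ad ℂ (ι ω u)) :=
  ad_surjective (w := ι ω ((ω u w)⁻¹ • w))
    (by rw [map_smul, map_smul, ad_ι_ι, Algebra.smul_def, ← map_mul, inv_mul_cancel₀ h,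
      map_one])
    (adNilpotentSubalgebra_ι ω u)

end WeylAlgebra

theorem twisted_trace_weyl_eigenvalue_one_vanishes_general {V : Type*} [AddCommGroup V]
    [Module ℂ V]
    (ω : V →ₗ[ℂ] V →ₗ[ℂ] ℂ)
    (hnd : ∀ v : V, (∀ w : V, ω v w = 0) → v = 0)
    (g : V ≃ₗ[ℂ] V)
    (u : V) (hu : u ≠ 0) (hgu : g u = u)
    (G : WeylAlgebra ω ≃ₐ[ℂ] WeylAlgebra ω)
    (hG : ∀ v : V, G (RingQuot.mkAlgHom ℂ (WeylRel ω) (TensorAlgebra.ι ℂ v)) =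
      RingQuot.mkAlgHom ℂ (WeylRel ω) (TensorAlgebra.ι ℂ (g v)))
    (T : WeylAlgebra ω →ₗ[ℂ] ℂ)
    (hT : ∀ a b : WeylAlgebra ω, T (a * b) = T (b * G a)) :
    T = 0 := by
  obtain ⟨w, hw⟩ : ∃ w, ω u w ≠ 0 := by
    by_contra! h
    exact hu (hnd u h)
  have hGu : G (WeylAlgebra.ι ω u) = WeylAlgebra.ι ω u := by
    rw [WeylAlgebra.ι_apply, hG, hgu]
  ext a
  obtain ⟨b, rfl⟩ := WeylAlgebra.ad_ι_surjective ω hw a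
  exact twisted_trace_ad_eq_zero hT hGu b

/-- Let `V` be a finite-dimensional (nondegenerate) symplectic
vector space, `g` a symplectic automorphism of `V` having `1` as an eigenvalue
(there is a nonzero `u` with `g u = u`), and `G` the induced algebra
automorphism of the Weyl algebra `W(V)`.  Then every `G`-twisted trace on
`W(V)` vanishes. -/
theorem twisted_trace_weyl_eigenvalue_one_vanishes {V : Type*} [AddCommGroup V]
    [Module ℂ V] [FiniteDimensional ℂ V]
    (ω : V →ₗ[ℂ] V →ₗ[ℂ] ℂ)
    (halt : ∀ v : V, ω v v = 0)
    (hnd : ∀ v : V, (∀ w : V, ω v w = 0) → v = 0)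
    (g : V ≃ₗ[ℂ] V)
    (hsymp : ∀ v w : V, ω (g v) (g w) = ω v w)
    (u : V) (hu : u ≠ 0) (hgu : g u = u)
    (G : WeylAlgebra ω ≃ₐ[ℂ] WeylAlgebra ω)
    (hG : ∀ v : V, G (RingQuot.mkAlgHom ℂ (WeylRel ω) (TensorAlgebra.ι ℂ v)) =
      RingQuot.mkAlgHom ℂ (WeylRel ω) (TensorAlgebra.ι ℂ (g v)))
    (T : WeylAlgebra ω →ₗ[ℂ] ℂ)
    (hT : ∀ a b : WeylAlgebra ω, T (a * b) = T (b * G a)) :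
    T = 0 :=
  twisted_trace_weyl_eigenvalue_one_vanishes_general ω hnd g u hu hgu G hG T hT
end

section
/- Let V be a finite-dimensional symplectic vector space, g ∈ Sp(V) with no eigenvalue 1. Then the space of g-twisted traces on the Weyl algebra W(V) is at most one-dimensional. More precisely, if E ⊂ W(V) is the span of elements ab − b·g(a), then the associated graded of E (with respect to the Bernstein filtration) contains the augmentation ideal of SV, so dim W(V)/E ≤ 1. -/
/-!
Since `1 - g` is invertible, every generator `u ∈ V` is `v - g v`, and then
`u c = (v c - c · g v) - [g v, c]` is a twisted commutator plus an ordinary one. Commutators of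
generators are scalars, so `[g v, -]` preserves every step `Fₙ = (ℂ ⊕ V)ⁿ` of the Bernstein
filtration, and induction on `n` gives `Fₙ ⊆ ℂ · 1 + E`. Hence `W(V) = ℂ · 1 + E`, and any two
functionals vanishing on `E` are proportional.
-/

theorem LinearMap.surjective_id_sub_of_fixed_eq_zero {K V : Type*} [DivisionRing K]
    [AddCommGroup V] [Module K V] [FiniteDimensional K V] (g : V →ₗ[K] V)
    (hg : ∀ v, g v = v → v = 0) :
    Function.Surjective (LinearMap.id - g : V →ₗ[K] V) := by
  refine LinearMap.injective_iff_surjective.mp ((injective_iff_map_eq_zero _).mpr fun v hv ↦ ?_)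
  exact hg v (sub_eq_zero.mp hv).symm

theorem Module.Dual.exists_ne_zero_combination_eq_zero_of_span_singleton_sup_eq_top
    {K W : Type*} [Field K] [AddCommGroup W] [Module K W] {w : W} {E : Submodule K W}
    (hE : K ∙ w ⊔ E = ⊤) {T₁ T₂ : W →ₗ[K] K}
    (hT₁ : E ≤ LinearMap.ker T₁) (hT₂ : E ≤ LinearMap.ker T₂) :
    ∃ c d : K, (c ≠ 0 ∨ d ≠ 0) ∧ c • T₁ + d • T₂ = 0 := by
  have hvanish : ∀ T : W →ₗ[K] K, E ≤ LinearMap.ker T → T w = 0 → T = 0 := fun T hE' hw ↦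
    LinearMap.ker_eq_top.mp <| top_le_iff.mp <| hE ▸
      sup_le ((Submodule.span_singleton_le_iff_mem _ _).mpr hw) hE'
  by_cases h₁ : T₁ w = 0
  · exact ⟨1, 0, .inl one_ne_zero, by rw [hvanish T₁ hT₁ h₁]; simp⟩
  · refine ⟨T₂ w, -T₁ w, .inr (neg_ne_zero.mpr h₁), hvanish _ ?_ ?_⟩
    · intro x hx
      simp [LinearMap.mem_ker.mp (hT₁ hx), LinearMap.mem_ker.mp (hT₂ hx)]
    · simp only [LinearMap.add_apply, LinearMap.smul_apply, smul_eq_mul]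
      ring

section TwistedCommutators

variable {R A : Type*} [CommRing R] [Ring A] [Algebra R A]

variable (R) in
def twistedCommutators (σ : A → A) : Submodule R A :=
  Submodule.span R {x | ∃ a b : A, x = a * b - b * σ a}

theorem twistedCommutators_le_ker {σ : A → A} {T : A →ₗ[R] R}
    (hT : ∀ a b : A, T (a * b) = T (b * σ a)) : twistedCommutators R σ ≤ LinearMap.ker T := by
  refine Submodule.span_le.mpr ?_
  rintro _ ⟨a, b, rfl⟩
  rw [SetLike.mem_coe, LinearMap.mem_ker, map_sub, hT, sub_self]

theorem Submodule.exists_mem_one_sup_pow_of_mem_adjoin {M : Submodule R A} {x : A}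
    (hx : x ∈ Algebra.adjoin R (M : Set A)) : ∃ n, x ∈ (1 ⊔ M) ^ n := by
  induction hx using Algebra.adjoin_induction with
  | mem x hx => exact ⟨1, by simp [Submodule.mem_sup_right hx]⟩
  | algebraMap r => exact ⟨0, by simp [Submodule.algebraMap_mem r]⟩
  | add x y _ _ ihx ihy =>
    obtain ⟨p, hp⟩ := ihx
    obtain ⟨q, hq⟩ := ihy
    have mono : Monotone ((1 ⊔ M) ^ · : ℕ → Submodule R A) := pow_right_monotone le_sup_left
    exact ⟨max p q, add_mem (mono (le_max_left p q) hp) (mono (le_max_right p q) hq)⟩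
  | mul x y _ _ ihx ihy =>
    obtain ⟨p, hp⟩ := ihx
    obtain ⟨q, hq⟩ := ihy
    exact ⟨p + q, pow_add (1 ⊔ M) p q ▸ Submodule.mul_mem_mul hp hq⟩

theorem Submodule.mul_sub_mul_mem_pow {P : Submodule R A} {m : A}
    (hm : ∀ x ∈ P, m * x - x * m ∈ P) {n : ℕ} {x : A} (hx : x ∈ P ^ n) :
    m * x - x * m ∈ P ^ n := by
  induction hx using Submodule.pow_induction_on_left' with
  | algebraMap r => simp [Algebra.commutes]
  | add x y i _ _ ihx ihy => simpa [mul_add, add_mul, add_sub_add_comm] using add_mem ihx ihy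
  | mem_mul p hp i x hx ih =>
    have leibniz : m * (p * x) - p * x * m = (m * p - p * m) * x + p * (m * x - x * m) := by
      noncomm_ring
    rw [leibniz, pow_succ']
    exact add_mem (Submodule.mul_mem_mul (hm p hp) hx) (Submodule.mul_mem_mul hp ih)

theorem one_sup_twistedCommutators_eq_top {M : Submodule R A} {σ : A → A}
    (hgen : Algebra.adjoin R (M : Set A) = ⊤)
    (hcomm : ∀ m ∈ M, ∀ x ∈ M, m * x - x * m ∈ (1 : Submodule R A))
    (hσ : ∀ u ∈ M, ∃ v ∈ M, σ v ∈ M ∧ u = v - σ v) :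
    1 ⊔ twistedCommutators R σ = ⊤ := by
  set P := 1 ⊔ M
  have hP : ∀ m ∈ M, ∀ x ∈ P, m * x - x * m ∈ P := by
    intro m hm x hx
    obtain ⟨y, hy, z, hz, rfl⟩ := Submodule.mem_sup.mp hx
    obtain ⟨r, rfl⟩ := Submodule.mem_one.mp hy
    have hscalar : m * (algebraMap R A r + z) - (algebraMap R A r + z) * m = m * z - z * m := by
      rw [mul_add, add_mul, Algebra.commutes]; abel
    exact hscalar ▸ Submodule.mem_sup_left (hcomm m hm z hz)
  have hpow : ∀ n, P ^ n ≤ 1 ⊔ twistedCommutators R σ := by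
    intro n
    induction n with
    | zero => exact pow_zero P ▸ le_sup_left
    | succ n ih =>
      rw [pow_succ', Submodule.sup_mul, one_mul]
      refine sup_le ih (Submodule.mul_le.mpr fun u hu c hc ↦ ?_)
      obtain ⟨v, hv, hσv, rfl⟩ := hσ u hu
      have split : (v - σ v) * c = (v * c - c * σ v) - (σ v * c - c * σ v) := by noncomm_ring
      rw [split]
      exact sub_mem (Submodule.mem_sup_right (Submodule.subset_span ⟨v, c, rfl⟩))
        (ih (Submodule.mul_sub_mul_mem_pow (hP _ hσv) hc))
  refine eq_top_iff.mpr fun x _ ↦ ?_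
  obtain ⟨n, hn⟩ := Submodule.exists_mem_one_sup_pow_of_mem_adjoin (hgen ▸ Algebra.mem_top)
  exact hpow n hn

end TwistedCommutators

namespace WeylAlgebra

variable {V : Type*} [AddCommGroup V] [Module ℂ V] (ω : V →ₗ[ℂ] V →ₗ[ℂ] ℂ)

theorem ι_mul_ι_sub_ι_mul_ι (v w : V) :
    ι ω v * ι ω w - ι ω w * ι ω v = algebraMap ℂ (WeylAlgebra ω) (ω v w) := by
  simpa only [ι_apply, map_sub, map_mul, AlgHom.commutes] using
    RingQuot.mkAlgHom_rel ℂ (WeylRel.mk (ω := ω) v w)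

theorem adjoin_range_ι : Algebra.adjoin ℂ (LinearMap.range (ι ω) : Set (WeylAlgebra ω)) = ⊤ := by
  rw [LinearMap.coe_range, ι, LinearMap.coe_comp, Set.range_comp, AlgHom.coe_toLinearMap,
    ← AlgHom.map_adjoin, TensorAlgebra.adjoin_range_ι, Algebra.map_top, AlgHom.range_eq_top]
  exact RingQuot.mkAlgHom_surjective ℂ (WeylRel ω)

theorem mul_sub_mul_mem_one {m x : WeylAlgebra ω} (hm : m ∈ LinearMap.range (ι ω))
    (hx : x ∈ LinearMap.range (ι ω)) : m * x - x * m ∈ (1 : Submodule ℂ (WeylAlgebra ω)) := by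
  obtain ⟨v, rfl⟩ := hm
  obtain ⟨w, rfl⟩ := hx
  exact ι_mul_ι_sub_ι_mul_ι ω v w ▸ Submodule.algebraMap_mem (ω v w)

end WeylAlgebra

theorem twisted_traces_weyl_dim_le_one_general {V : Type*} [AddCommGroup V]
    [Module ℂ V] [FiniteDimensional ℂ V]
    (ω : V →ₗ[ℂ] V →ₗ[ℂ] ℂ)
    (g : V ≃ₗ[ℂ] V)
    (hone : ∀ v : V, g v = v → v = 0)
    (G : WeylAlgebra ω ≃ₐ[ℂ] WeylAlgebra ω)
    (hG : ∀ v : V, G (RingQuot.mkAlgHom ℂ (WeylRel ω) (TensorAlgebra.ι ℂ v)) =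
      RingQuot.mkAlgHom ℂ (WeylRel ω) (TensorAlgebra.ι ℂ (g v)))
    (T₁ T₂ : WeylAlgebra ω →ₗ[ℂ] ℂ)
    (hT₁ : ∀ a b : WeylAlgebra ω, T₁ (a * b) = T₁ (b * G a))
    (hT₂ : ∀ a b : WeylAlgebra ω, T₂ (a * b) = T₂ (b * G a)) :
    ∃ c d : ℂ, (c ≠ 0 ∨ d ≠ 0) ∧ c • T₁ + d • T₂ = 0 := by
  have hsurj := LinearMap.surjective_id_sub_of_fixed_eq_zero g.toLinearMap hone
  have htwist : ∀ u ∈ LinearMap.range (WeylAlgebra.ι ω), ∃ v ∈ LinearMap.range (WeylAlgebra.ι ω),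
      G v ∈ LinearMap.range (WeylAlgebra.ι ω) ∧ u = v - G v := by
    rintro _ ⟨u, rfl⟩
    obtain ⟨v, rfl⟩ := hsurj u
    exact ⟨_, ⟨v, rfl⟩, ⟨g v, (hG v).symm⟩, by simp [WeylAlgebra.ι_apply, hG]⟩
  have htop := one_sup_twistedCommutators_eq_top (WeylAlgebra.adjoin_range_ι ω)
    (fun _ hm _ hx ↦ WeylAlgebra.mul_sub_mul_mem_one ω hm hx) htwist
  rw [Submodule.one_eq_span] at htop
  exact Module.Dual.exists_ne_zero_combination_eq_zero_of_span_singleton_sup_eq_top htop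
    (twistedCommutators_le_ker hT₁) (twistedCommutators_le_ker hT₂)

/-- For a symplectic automorphism `g` of a finite-dimensional
symplectic vector space `V` with no eigenvalue `1`, the space of `G`-twisted
traces on the Weyl algebra `W(V)` (where `G` is the automorphism of `W(V)`
induced by `g`) is at most one-dimensional: any two such traces are linearly
dependent. -/
theorem twisted_traces_weyl_dim_le_one {V : Type*} [AddCommGroup V]
    [Module ℂ V] [FiniteDimensional ℂ V]
    (ω : V →ₗ[ℂ] V →ₗ[ℂ] ℂ)
    (halt : ∀ v : V, ω v v = 0)
    (hnd : ∀ v : V, (∀ w : V, ω v w = 0) → v = 0)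
    (g : V ≃ₗ[ℂ] V)
    (hsymp : ∀ v w : V, ω (g v) (g w) = ω v w)
    (hone : ∀ v : V, g v = v → v = 0)
    (G : WeylAlgebra ω ≃ₐ[ℂ] WeylAlgebra ω)
    (hG : ∀ v : V, G (RingQuot.mkAlgHom ℂ (WeylRel ω) (TensorAlgebra.ι ℂ v)) =
      RingQuot.mkAlgHom ℂ (WeylRel ω) (TensorAlgebra.ι ℂ (g v)))
    (T₁ T₂ : WeylAlgebra ω →ₗ[ℂ] ℂ)
    (hT₁ : ∀ a b : WeylAlgebra ω, T₁ (a * b) = T₁ (b * G a))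
    (hT₂ : ∀ a b : WeylAlgebra ω, T₂ (a * b) = T₂ (b * G a)) :
    ∃ c d : ℂ, (c ≠ 0 ∨ d ≠ 0) ∧ c • T₁ + d • T₂ = 0 :=
  twisted_traces_weyl_dim_le_one_general ω g hone G hG T₁ T₂ hT₁ hT₂
end
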